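/- arXiv:1609.08688 — 8 statements merged into one kernel-verified Lean document; each statement's English description precedes it below -/
import Mathlib

section
/- Let T be a 2-comparable set of triples, viewed as triangles in a tripartite graph on vertex sets A = B = C = [n] (the triple (a,b,c) contributes edges ab, bc, ac). Then no two distinct triples of T share an edge, and the only triangles in the resulting graph are those coming from triples of T. In particular, there are no three triples in T of the form (x,b,c), (a,y,c), (a,b,z) with x≠a, y≠b, z≠c. -/
/-- `a` is 2-less than `b`: `a_i < b_i` in at least two of the three coordinates. -/
def Less2 (a b : ℤ × ℤ × ℤ) : Prop :=
  (a.1 < b.1 ∧ a.2.1 < b.2.1) ∨ (a.1 < b.1 ∧ a.2.2 < b.2.2) ∨ (a.2.1 < b.2.1 ∧ a.2.2 < b.2.2)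

/-- The two triples contain a common edge of the tripartite graph. -/
def SharesEdge (a b : ℤ × ℤ × ℤ) : Prop :=
  (a.1 = b.1 ∧ a.2.1 = b.2.1) ∨ (a.1 = b.1 ∧ a.2.2 = b.2.2) ∨ (a.2.1 = b.2.1 ∧ a.2.2 = b.2.2)

theorem SharesEdge.symm {a b : ℤ × ℤ × ℤ} (h : SharesEdge a b) : SharesEdge b a := by
  unfold SharesEdge at *
  omega

theorem not_less2_of_sharesEdge {a b : ℤ × ℤ × ℤ} (h : SharesEdge a b) : ¬ Less2 a b := by
  unfold SharesEdge Less2 at *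
  omega

/- Each pair of the three triples shares one coordinate, so comparability orders the other two
coordinates the same way. If `x < a`, the first two pairs give `b < y` and `c < z`, which leaves
`(a, y, c)` and `(a, b, z)` incomparable; symmetrically if `a < x`. -/
theorem false_of_comparable_triangle {a b c x y z : ℤ}
    (hxy : Less2 (x, b, c) (a, y, c) ∨ Less2 (a, y, c) (x, b, c))
    (hxz : Less2 (x, b, c) (a, b, z) ∨ Less2 (a, b, z) (x, b, c))
    (hyz : Less2 (a, y, c) (a, b, z) ∨ Less2 (a, b, z) (a, y, c)) : False := by
  simp only [Less2] at hxy hxz hyz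
  omega

theorem stmt_4_general (T : Set (ℤ × ℤ × ℤ))
    (hcomp : ∀ a ∈ T, ∀ b ∈ T, a ≠ b → Less2 a b ∨ Less2 b a) :
    (∀ a ∈ T, ∀ b ∈ T, a ≠ b →
      ¬((a.1 = b.1 ∧ a.2.1 = b.2.1) ∨ (a.1 = b.1 ∧ a.2.2 = b.2.2) ∨
        (a.2.1 = b.2.1 ∧ a.2.2 = b.2.2))) ∧
    (∀ a b c x y z : ℤ, (x, b, c) ∈ T → (a, y, c) ∈ T → (a, b, z) ∈ T →
      x ≠ a → y ≠ b → z ≠ c → False) := by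
  refine ⟨fun a ha b hb hne hshare => ?_, fun a b c x y z hx hy hz hxa hyb _ => ?_⟩
  · exact (hcomp a ha b hb hne).elim (not_less2_of_sharesEdge hshare)
      (not_less2_of_sharesEdge (SharesEdge.symm hshare))
  · exact false_of_comparable_triangle
      (hcomp _ hx _ hy fun h => hxa (congrArg Prod.fst h))
      (hcomp _ hx _ hz fun h => hxa (congrArg Prod.fst h))
      (hcomp _ hy _ hz fun h => hyb (congrArg (·.2.1) h))

/-- Viewing a 2-comparable set of triples as triangles in a tripartite graph,
no two distinct triples share an edge (i.e. agree in two of the coordinates),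
and there are no three triples of the form `(x,b,c)`, `(a,y,c)`, `(a,b,z)` with
`x ≠ a`, `y ≠ b`, `z ≠ c` (so the only triangles in the graph come from triples of `T`). -/
theorem stmt_4 (n : ℕ) (T : Set (ℤ × ℤ × ℤ))
    (hrange : ∀ t ∈ T, t.1 ∈ Finset.Icc (1 : ℤ) n ∧ t.2.1 ∈ Finset.Icc (1 : ℤ) n ∧
      t.2.2 ∈ Finset.Icc (1 : ℤ) n)
    (hcomp : ∀ a ∈ T, ∀ b ∈ T, a ≠ b → Less2 a b ∨ Less2 b a) :
    (∀ a ∈ T, ∀ b ∈ T, a ≠ b →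
      ¬((a.1 = b.1 ∧ a.2.1 = b.2.1) ∨ (a.1 = b.1 ∧ a.2.2 = b.2.2) ∨
        (a.2.1 = b.2.1 ∧ a.2.2 = b.2.2))) ∧
    (∀ a b c x y z : ℤ, (x, b, c) ∈ T → (a, y, c) ∈ T → (a, b, z) ∈ T →
      x ≠ a → y ≠ b → z ≠ c → False) :=
  stmt_4_general T hcomp
end

section
/- For all integers r ≥ s ≥ 1 and n ≥ 1, every s-comparable set of r-tuples with coordinates in [n] has size at most n^{r-s+1}. -/
/-! Two distinct tuples of an `s`-comparable set cannot agree on `r - s + 1` coordinates, since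
one of them is smaller than the other on `s` coordinates and only `s - 1` remain. Hence the
projection onto any `r - s + 1` fixed coordinates is injective on such a set, and its image lies
in `[n]^(r-s+1)`. -/

/-- `a` is `s`-less than `b`: `a i < b i` for at least `s` coordinates `i`. -/
def SLess (r s : ℕ) (a b : Fin r → ℤ) : Prop :=
  s ≤ (Finset.univ.filter (fun i => a i < b i)).card

open Finset

variable {r s n : ℕ}

lemma card_filter_lt_le_card_compl_of_eqOn {a b : Fin r → ℤ} {S : Finset (Fin r)}
    (h : ∀ i ∈ S, a i = b i) : #{i | a i < b i} ≤ #Sᶜ :=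
  card_le_card fun i hi => mem_compl.2 fun hiS =>
    (mem_filter.1 hi).2.ne (h i hiS)

lemma not_sLess_of_eqOn {a b : Fin r → ℤ} {S : Finset (Fin r)} (hrS : r < #S + s)
    (h : ∀ i ∈ S, a i = b i) : ¬ SLess r s a b := by
  have hle := card_filter_lt_le_card_compl_of_eqOn h
  rw [card_compl, Fintype.card_fin] at hle
  intro hlt
  have hsS : s ≤ r - #S := hlt.trans hle
  have hSr : #S ≤ r := by simpa using S.card_le_univ
  omega

lemma card_le_pow_card_of_sComparable (T : Finset (Fin r → ℤ)) (S : Finset (Fin r))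
    (hrS : r < #S + s) (hrange : ∀ a ∈ T, ∀ i, a i ∈ Icc (1 : ℤ) n)
    (hcomp : ∀ a ∈ T, ∀ b ∈ T, a ≠ b → SLess r s a b ∨ SLess r s b a) :
    #T ≤ n ^ #S := by
  have hcard : #(Fintype.piFinset fun _ : S => Icc (1 : ℤ) n) = n ^ #S := by simp
  rw [← hcard]
  refine card_le_card_of_injOn (fun a (i : S) => a i)
    (fun a ha => Fintype.mem_piFinset.2 fun i => hrange a ha i) fun a ha b hb hab => ?_
  by_contra hne
  have hagree : ∀ i ∈ S, a i = b i := fun i hi => congrFun hab ⟨i, hi⟩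
  rcases hcomp a ha b hb hne with hlt | hlt
  · exact not_sLess_of_eqOn hrS hagree hlt
  · exact not_sLess_of_eqOn hrS (fun i hi => (hagree i hi).symm) hlt

theorem stmt_6_general (r s n : ℕ) (hs : 1 ≤ s) (hsr : s ≤ r)
    (T : Finset (Fin r → ℤ))
    (hrange : ∀ a ∈ T, ∀ i, a i ∈ Finset.Icc (1 : ℤ) n)
    (hcomp : ∀ a ∈ T, ∀ b ∈ T, a ≠ b → SLess r s a b ∨ SLess r s b a) :
    T.card ≤ n ^ (r - s + 1) := by
  obtain ⟨S, -, hS⟩ := exists_subset_card_eq (s := (univ : Finset (Fin r))) (n := r - s + 1)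
    (by simp only [card_univ, Fintype.card_fin]; omega)
  rw [← hS]
  exact card_le_pow_card_of_sComparable T S (by omega) hrange hcomp

/-- Every `s`-comparable set of `r`-tuples with coordinates in `[n]` has size at
most `n^(r-s+1)`. -/
theorem stmt_6 (r s n : ℕ) (hs : 1 ≤ s) (hsr : s ≤ r) (hn : 1 ≤ n)
    (T : Finset (Fin r → ℤ))
    (hrange : ∀ a ∈ T, ∀ i, a i ∈ Finset.Icc (1 : ℤ) n)
    (hcomp : ∀ a ∈ T, ∀ b ∈ T, a ≠ b → SLess r s a b ∨ SLess r s b a) :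
    T.card ≤ n ^ (r - s + 1) :=
  stmt_6_general r s n hs hsr T hrange hcomp
end

section
/- The set A = {(a,b) ∈ [n]^2 : a ∈ {n-1, n} or b ∈ {1, 2}} \ {(n,1)} has cardinality 4n - 5 (for n ≥ 2) and contains no three pairs x, y, z with x_1 < y_1, x_2 < y_2, and z weakly 2-comparable to neither x nor y. -/
/-
Among pairs `x, y` with `x < y` strictly in both coordinates, a point `z` incomparable to both
must lie strictly north-west of the pair (`z₁ < x₁`, `z₂ > y₂`) or strictly south-east of it
(`z₁ > y₁`, `z₂ < x₂`); the mixed cases contradict `x < y`. In `A` a north-west `z` would have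
`z₁ ≤ n - 2` and `z₂ ≥ 3`, leaving the two bottom rows and the two right columns; a south-east
`z` forces `x = (·, 2)`, `y = (n - 1, ·)` and `z = (n, 1)`, the one point removed from `A`.
-/

/-- Two pairs are weakly 2-comparable if one is coordinatewise ≤ the other. -/
def Weak2Comparable (a b : ℕ × ℕ) : Prop :=
  (a.1 ≤ b.1 ∧ a.2 ≤ b.2) ∨ (a.1 ≥ b.1 ∧ a.2 ≥ b.2)

theorem not_weak2Comparable_iff {z x : ℕ × ℕ} :
    ¬ Weak2Comparable z x ↔ (z.1 < x.1 ∧ x.2 < z.2) ∨ (x.1 < z.1 ∧ z.2 < x.2) := by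
  unfold Weak2Comparable
  omega

theorem northWest_or_southEast_of_not_weak2Comparable {x y z : ℕ × ℕ}
    (h₁ : x.1 < y.1) (h₂ : x.2 < y.2) (hzx : ¬ Weak2Comparable z x)
    (hzy : ¬ Weak2Comparable z y) :
    (z.1 < x.1 ∧ y.2 < z.2) ∨ (y.1 < z.1 ∧ z.2 < x.2) := by
  rw [not_weak2Comparable_iff] at hzx hzy
  omega

def hookSet (n : ℕ) : Finset (ℕ × ℕ) :=
  ((Finset.Icc 1 n ×ˢ Finset.Icc 1 n).filter
    (fun p => p.1 = n - 1 ∨ p.1 = n ∨ p.2 = 1 ∨ p.2 = 2)).erase (n, 1)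

theorem mem_hookSet {n : ℕ} {p : ℕ × ℕ} :
    p ∈ hookSet n ↔ p ≠ (n, 1) ∧ (1 ≤ p.1 ∧ p.1 ≤ n) ∧ (1 ≤ p.2 ∧ p.2 ≤ n) ∧
      (p.1 = n - 1 ∨ p.1 = n ∨ p.2 = 1 ∨ p.2 = 2) := by
  simp only [hookSet, Finset.mem_erase, Finset.mem_filter, Finset.mem_product, Finset.mem_Icc,
    and_assoc]

theorem hookSet_eq_erase_union {n : ℕ} (hn : 2 ≤ n) :
    hookSet n = (({n - 1, n} ×ˢ Finset.Icc 1 n) ∪ (Finset.Icc 1 (n - 2) ×ˢ {1, 2})).erase (n, 1) := by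
  ext p
  simp only [mem_hookSet, Finset.mem_erase, Finset.mem_union, Finset.mem_product,
    Finset.mem_Icc, Finset.mem_insert, Finset.mem_singleton, ne_eq, Prod.ext_iff]
  omega

theorem card_hookSet {n : ℕ} (hn : 2 ≤ n) : (hookSet n).card = 4 * n - 5 := by
  have hdisj : Disjoint ({n - 1, n} ×ˢ Finset.Icc 1 n) (Finset.Icc 1 (n - 2) ×ˢ {1, 2}) := by
    rw [Finset.disjoint_left]
    intro p hp hp'
    simp only [Finset.mem_product, Finset.mem_Icc, Finset.mem_insert,
      Finset.mem_singleton] at hp hp'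
    omega
  have hcorner : (n, 1) ∈ ({n - 1, n} ×ˢ Finset.Icc 1 n) ∪ (Finset.Icc 1 (n - 2) ×ˢ {1, 2}) :=
    Finset.mem_union_left _ (Finset.mem_product.2 ⟨by simp, Finset.mem_Icc.2 ⟨le_rfl, by omega⟩⟩)
  have hcols : ({n - 1, n} : Finset ℕ).card = 2 :=
    Finset.card_pair (by omega)
  rw [hookSet_eq_erase_union hn, Finset.card_erase_of_mem hcorner,
    Finset.card_union_of_disjoint hdisj, Finset.card_product, Finset.card_product, hcols,
    Finset.card_pair (by omega), Nat.card_Icc, Nat.card_Icc]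
  omega

theorem not_northWest_in_hookSet {n : ℕ} {x y z : ℕ × ℕ} (hx : x ∈ hookSet n)
    (hy : y ∈ hookSet n) (hz : z ∈ hookSet n) (h₁ : x.1 < y.1) (h₂ : x.2 < y.2) :
    ¬ (z.1 < x.1 ∧ y.2 < z.2) := by
  rw [mem_hookSet] at hx hy hz
  omega

theorem not_southEast_in_hookSet {n : ℕ} {x y z : ℕ × ℕ} (hx : x ∈ hookSet n)
    (hy : y ∈ hookSet n) (hz : z ∈ hookSet n) (h₁ : x.1 < y.1) (h₂ : x.2 < y.2) :
    ¬ (y.1 < z.1 ∧ z.2 < x.2) := by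
  rw [mem_hookSet] at hx hy hz
  simp only [ne_eq, Prod.ext_iff, not_and] at hz
  omega

/-- The set `A = {(a,b) ∈ [n]² : a ∈ {n-1,n} or b ∈ {1,2}} \ {(n,1)}` has cardinality
`4n - 5` (for `n ≥ 2`) and contains no three pairs `x, y, z` with `x₁ < y₁`, `x₂ < y₂`,
and `z` weakly 2-comparable to neither `x` nor `y`. -/
theorem stmt_9 (n : ℕ) (hn : 2 ≤ n) (A : Finset (ℕ × ℕ))
    (hA : A = ((Finset.Icc 1 n ×ˢ Finset.Icc 1 n).filter
      (fun p => p.1 = n - 1 ∨ p.1 = n ∨ p.2 = 1 ∨ p.2 = 2)).erase (n, 1)) :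
    A.card = 4 * n - 5 ∧
    ¬ ∃ x ∈ A, ∃ y ∈ A, ∃ z ∈ A,
      (x.1 < y.1 ∧ x.2 < y.2) ∧ ¬ Weak2Comparable z x ∧ ¬ Weak2Comparable z y := by
  change A = hookSet n at hA
  subst hA
  refine ⟨card_hookSet hn, ?_⟩
  rintro ⟨x, hx, y, hy, z, hz, ⟨h₁, h₂⟩, hzx, hzy⟩
  rcases northWest_or_southEast_of_not_weak2Comparable h₁ h₂ hzx hzy with hnw | hse
  · exact not_northWest_in_hookSet hx hy hz h₁ h₂ hnw
  · exact not_southEast_in_hookSet hx hy hz h₁ h₂ hse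
end

section
/- A 2-comparable set T of triples in [r]^3 has size at most 3r^2/4 if r is even, and at most 3r^2/4 + r/2 + 3/4 if r is odd. -/
open Finset

theorem Finset.sum_le_of_add_le {ι M : Type*} [AddCommMonoid M] [PartialOrder M]
    [IsOrderedAddMonoid M] (f : ι → M) (s t : M) (S : Finset ι)
    (hpair : ∀ a ∈ S, ∀ b ∈ S, a ≠ b → f a + f b ≤ s) (hle : ∀ a ∈ S, f a ≤ t) :
    ∑ a ∈ S, f a ≤ (#S / 2) • s + (#S % 2) • t := by
  classical
  induction hS : #S using Nat.strong_induction_on generalizing S with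
  | _ n ih =>
    match n, hS with
    | 0, hS => simp [card_eq_zero.mp hS]
    | 1, hS =>
      obtain ⟨a, rfl⟩ := card_eq_one.mp hS
      simpa using hle a (mem_singleton_self a)
    | n + 2, hS =>
      obtain ⟨a, ha⟩ : S.Nonempty := card_pos.mp (by omega)
      obtain ⟨b, hb⟩ : (S.erase a).Nonempty := card_pos.mp (by rw [card_erase_of_mem ha]; omega)
      set R := (S.erase a).erase b
      have hRS : R ⊆ S := (erase_subset _ _).trans (erase_subset _ _)
      have hR : #R = n := by rw [card_erase_of_mem hb, card_erase_of_mem ha]; omega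
      have hsum : ∑ c ∈ S, f c = (f a + f b) + ∑ c ∈ R, f c := by
        rw [← add_sum_erase S f ha, ← add_sum_erase _ f hb, add_assoc]
      have hrest := ih n (by omega) R (fun c hc d hd => hpair c (hRS hc) d (hRS hd))
        (fun c hc => hle c (hRS hc)) hR
      rw [hsum, show (n + 2) / 2 = n / 2 + 1 by omega, show (n + 2) % 2 = n % 2 by omega]
      have hab := hpair a ha b (mem_of_mem_erase hb) (ne_of_mem_erase hb).symm
      refine (add_le_add hab hrest).trans_eq ?_
      rw [succ_nsmul]
      abel

section TwoChains

variable {ι α β : Type*} [Preorder α] [Preorder β] {x : ι → α} {y : ι → β}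

theorem IsChain.injOn_left {A : Set ι} (hA : IsChain (fun a b => x a < x b ∧ y a < y b) A) :
    A.InjOn x :=
  fun a ha b hb hab => by_contra fun hne => by
    rcases hA ha hb hne with h | h
    · exact h.1.ne hab
    · exact h.1.ne hab.symm

theorem IsChain.injOn_right {A : Set ι} (hA : IsChain (fun a b => x a < x b ∧ y a < y b) A) :
    A.InjOn y :=
  IsChain.injOn_left (x := y) (y := x) (hA.mono_rel fun _ _ h => h.symm)

variable [DecidableEq α] [DecidableEq β]

theorem card_add_two_mul_card_le_of_isChain {A B : Finset ι}
    (hA : IsChain (fun a b => x a < x b ∧ y a < y b) (A : Set ι))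
    (hB : IsChain (fun a b => x a < x b ∧ y a < y b) (B : Set ι))
    (hAB : ∀ a ∈ A, ∀ b ∈ B, x a < x b ∨ y a < y b ∨ (x b < x a ∧ y b < y a)) :
    #A + 2 * #B ≤ #(A.image x ∪ B.image x) + #(A.image y ∪ B.image y) := by
  have hx : #(A.image x ∪ B.image x) + #(A.image x ∩ B.image x) = #A + #B := by
    rw [card_union_add_card_inter, card_image_of_injOn (hA.injOn_left),
      card_image_of_injOn (hB.injOn_left)]
  have hy : #(A.image y ∪ B.image y) + #(A.image y ∩ B.image y) = #A + #B := by
    rw [card_union_add_card_inter, card_image_of_injOn (hA.injOn_right),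
      card_image_of_injOn (hB.injOn_right)]
  have hnot_both : ∀ a ∈ A, y a ∈ B.image y → x a ∉ B.image x := by
    simp only [mem_image]
    rintro a ha ⟨b, hb, hyb⟩ ⟨b', hb', hxb'⟩
    have hxb : x a < x b := by
      rcases hAB a ha b hb with h | h | h
      · exact h
      · exact absurd hyb h.ne'
      · exact absurd hyb h.2.ne
    have hyb' : y a < y b' := by
      rcases hAB a ha b' hb' with h | h | h
      · exact absurd hxb' h.ne'
      · exact h
      · exact absurd hxb' h.1.ne
    have hx' : x b' < x b := hxb' ▸ hxb
    have hy' : y b < y b' := hyb ▸ hyb'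
    rcases hB hb hb' (by rintro rfl; exact hx'.false) with h | h
    · exact hx'.asymm h.1
    · exact hy'.asymm h.2
  have hxA : #(A.image x ∩ B.image x) ≤ #(A.filter fun a => x a ∈ B.image x) := by
    rw [← filter_mem_eq_inter, filter_image]
    exact card_image_le
  have hyA : #(A.image y ∩ B.image y) ≤ #(A.filter fun a => x a ∉ B.image x) :=
    calc #(A.image y ∩ B.image y) ≤ #(A.filter fun a => y a ∈ B.image y) := by
          rw [← filter_mem_eq_inter, filter_image]
          exact card_image_le
      _ ≤ #(A.filter fun a => x a ∉ B.image x) :=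
          card_le_card (monotone_filter_right A hnot_both)
  have := card_filter_add_card_filter_not (s := A) (fun a => x a ∈ B.image x)
  omega

end TwoChains

def TwoComparable (T : Finset (ℤ × ℤ × ℤ)) : Prop :=
  ∀ a ∈ T, ∀ b ∈ T, a ≠ b → Less2 a b ∨ Less2 b a

section Layers

variable {T : Finset (ℤ × ℤ × ℤ)} (hT : TwoComparable T)
include hT

theorem TwoComparable.isChain_layer (z : ℤ) :
    IsChain (fun a b : ℤ × ℤ × ℤ => a.1 < b.1 ∧ a.2.1 < b.2.1) ↑{t ∈ T | t.2.2 = z} := by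
  intro a ha b hb hab
  simp only [mem_coe, mem_filter] at ha hb
  rcases hT a ha.1 b hb.1 hab with h | h <;> unfold Less2 at h <;> omega

theorem TwoComparable.layer_cross {z z' : ℤ} (hz : z < z') :
    ∀ a ∈ {t ∈ T | t.2.2 = z}, ∀ b ∈ {t ∈ T | t.2.2 = z'},
      a.1 < b.1 ∨ a.2.1 < b.2.1 ∨ (b.1 < a.1 ∧ b.2.1 < a.2.1) := by
  intro a ha b hb
  simp only [mem_filter] at ha hb
  rcases hT a ha.1 b hb.1 (by rintro rfl; omega) with h | h <;> unfold Less2 at h <;> omega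

theorem TwoComparable.card_layer_le {r : ℕ} (hx : ∀ t ∈ T, t.1 ∈ Icc (1 : ℤ) r) (z : ℤ) :
    #{t ∈ T | t.2.2 = z} ≤ r := by
  simpa using card_le_card_of_injOn Prod.fst (fun t ht => hx t (mem_filter.1 ht).1)
    (hT.isChain_layer z).injOn_left

theorem TwoComparable.two_mul_card_layer_add_le {r : ℕ} (hx : ∀ t ∈ T, t.1 ∈ Icc (1 : ℤ) r)
    (hy : ∀ t ∈ T, t.2.1 ∈ Icc (1 : ℤ) r) {z z' : ℤ} (hz : z < z') :
    2 * (#{t ∈ T | t.2.2 = z} + #{t ∈ T | t.2.2 = z'}) ≤ 3 * r := by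
  have hcoord : ∀ (f : ℤ × ℤ × ℤ → ℤ), (∀ t ∈ T, f t ∈ Icc (1 : ℤ) r) →
      #({t ∈ T | t.2.2 = z}.image f ∪ {t ∈ T | t.2.2 = z'}.image f) ≤ r := fun f hf => by
    simpa using card_le_card (union_subset (image_subset_iff.2 fun t ht => hf t (mem_filter.1 ht).1)
      (image_subset_iff.2 fun t ht => hf t (mem_filter.1 ht).1))
  have := card_add_two_mul_card_le_of_isChain (hT.isChain_layer z) (hT.isChain_layer z')
    (hT.layer_cross hz)
  have := hcoord _ hx
  have := hcoord _ hy
  have := hT.card_layer_le hx z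
  omega

end Layers

/-- A 2-comparable set of triples in `[r]^3` has size at most `3r²/4` if `r` is even and
at most `3r²/4 + r/2 + 3/4` if `r` is odd (stated with denominators cleared). -/
theorem stmt_11 (r : ℕ) (T : Finset (ℤ × ℤ × ℤ))
    (hrange : ∀ t ∈ T, t.1 ∈ Finset.Icc (1 : ℤ) r ∧ t.2.1 ∈ Finset.Icc (1 : ℤ) r ∧
      t.2.2 ∈ Finset.Icc (1 : ℤ) r)
    (hcomp : ∀ a ∈ T, ∀ b ∈ T, a ≠ b → Less2 a b ∨ Less2 b a) :
    (Even r → 4 * T.card ≤ 3 * r ^ 2) ∧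
    (Odd r → 4 * T.card ≤ 3 * r ^ 2 + 2 * r + 3) := by
  have hT : TwoComparable T := hcomp
  have hx t ht := (hrange t ht).1
  have hy t ht := (hrange t ht).2.1
  have hcard : #T ≤ r / 2 * (3 * r / 2) + r % 2 * r :=
    calc #T = ∑ z ∈ Icc (1 : ℤ) r, #{t ∈ T | t.2.2 = z} :=
          card_eq_sum_card_fiberwise fun t ht => (hrange t ht).2.2
      _ ≤ _ := by
        refine (sum_le_of_add_le _ (3 * r / 2) r _ (fun z _ z' _ hzz' => ?_)
          fun z _ => hT.card_layer_le hx z).trans_eq (by simp)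
        rcases hzz'.lt_or_gt with h | h <;> have := hT.two_mul_card_layer_add_le hx hy h <;> omega
  refine ⟨fun ⟨k, hk⟩ => ?_, fun ⟨k, hk⟩ => ?_⟩ <;> subst hk
  · rw [show (k + k) / 2 = k by omega, show 3 * (k + k) / 2 = 3 * k by omega,
      show (k + k) % 2 = 0 by omega] at hcard
    nlinarith
  · rw [show (2 * k + 1) / 2 = k by omega, show 3 * (2 * k + 1) / 2 = 3 * k + 1 by omega,
      show (2 * k + 1) % 2 = 1 by omega] at hcard
    nlinarith
end

section
/- Suppose (x_1,y_1,z) and (x_2,y_2,z) are distinct triples in a 2-comparable set that share their third coordinate z and satisfy max{x_1,y_1} = max{x_2,y_2}. Then this leads to a contradiction; i.e., in a 2-comparable set of triples in [r]^3, for each value M the triples (x,y,z) with max{x,y} = M all have distinct third coordinates z, so there are at most r of them. -/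
theorem Less2.max_lt_of_snd_snd_eq {a b : ℤ × ℤ × ℤ} (h : Less2 a b) (hz : a.2.2 = b.2.2) :
    max a.1 a.2.1 < max b.1 b.2.1 := by
  rcases h with ⟨h₁, h₂⟩ | ⟨-, h₃⟩ | ⟨-, h₃⟩
  · exact max_lt_max h₁ h₂
  all_goals omega

theorem injOn_snd_snd_of_max_eq {S : Set (ℤ × ℤ × ℤ)}
    (hS : S.Pairwise fun a b => Less2 a b ∨ Less2 b a) (M : ℤ) :
    Set.InjOn (fun t => t.2.2) {t ∈ S | max t.1 t.2.1 = M} := by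
  intro a ⟨ha, haM⟩ b ⟨hb, hbM⟩ hz
  by_contra hab
  rcases hS ha hb hab with h | h
  · exact (h.max_lt_of_snd_snd_eq hz).ne (haM.trans hbM.symm)
  · exact (h.max_lt_of_snd_snd_eq hz.symm).ne (hbM.trans haM.symm)

/-- In a 2-comparable set of triples in `[r]^3`: two distinct triples with the same
max of the first two coordinates cannot share their third coordinate, and hence for
each value `M` there are at most `r` triples `(x,y,z)` in the set with `max x y = M`. -/
theorem stmt_12 (r : ℕ) (T : Finset (ℤ × ℤ × ℤ))
    (hrange : ∀ t ∈ T, t.1 ∈ Finset.Icc (1 : ℤ) r ∧ t.2.1 ∈ Finset.Icc (1 : ℤ) r ∧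
      t.2.2 ∈ Finset.Icc (1 : ℤ) r)
    (hcomp : ∀ a ∈ T, ∀ b ∈ T, a ≠ b → Less2 a b ∨ Less2 b a) :
    (∀ x₁ y₁ x₂ y₂ z : ℤ, (x₁, y₁, z) ∈ T → (x₂, y₂, z) ∈ T → (x₁, y₁) ≠ (x₂, y₂) →
      max x₁ y₁ = max x₂ y₂ → False) ∧
    (∀ M : ℤ, (T.filter (fun t => max t.1 t.2.1 = M)).card ≤ r) := by
  have hinj := injOn_snd_snd_of_max_eq (S := ↑T) hcomp
  refine ⟨fun x₁ y₁ x₂ y₂ z h₁ h₂ hne hmax => ?_, fun M => ?_⟩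
  · have heq := hinj (max x₂ y₂) ⟨h₁, hmax⟩ ⟨h₂, rfl⟩ rfl
    exact hne (by simpa using heq)
  · calc (T.filter (fun t => max t.1 t.2.1 = M)).card
        ≤ (Finset.Icc (1 : ℤ) r).card :=
          Finset.card_le_card_of_injOn _
            (fun t ht => (hrange t (Finset.mem_filter.mp ht).1).2.2)
            (by rw [Finset.coe_filter]; exact hinj M)
      _ = r := by simp
end

section
/- Let S be a finite collection of integer triples such that S contains no collapsible collection of size C, where a collapsible collection is a subset of S lying in a single plane of the form (x,*,*), (*,y,*) or (*,*,z) whose projection to the two free coordinates contains no two pairs p, q with p_1 < q_1 and p_2 < q_2. Then S contains a 2-comparable subset of size at least C^{-3}|S|. -/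
/-- A collapsible collection of triples: one lying entirely in a plane `(x,*,*)`,
`(*,y,*)` or `(*,*,z)`, whose projection to the two free coordinates contains no two
pairs `p, q` with `p₁ < q₁` and `p₂ < q₂`. -/
def Collapsible (H : Finset (ℤ × ℤ × ℤ)) : Prop :=
  ((∃ x, ∀ t ∈ H, t.1 = x) ∧ ∀ a ∈ H, ∀ b ∈ H, ¬(a.2.1 < b.2.1 ∧ a.2.2 < b.2.2)) ∨
  ((∃ y, ∀ t ∈ H, t.2.1 = y) ∧ ∀ a ∈ H, ∀ b ∈ H, ¬(a.1 < b.1 ∧ a.2.2 < b.2.2)) ∨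
  ((∃ z, ∀ t ∈ H, t.2.2 = z) ∧ ∀ a ∈ H, ∀ b ∈ H, ¬(a.1 < b.1 ∧ a.2.1 < b.2.1))

namespace Finset

variable {α : Type*} {r : α → α → Prop} {s : Finset α} {x y : α}

open Classical in
noncomputable def chainHeightBelow (r : α → α → Prop) (s : Finset α) (x : α) : ℕ :=
  ({y ∈ s | r y x}.powerset.filter fun t : Finset α => IsChain r (t : Set α)).sup card

lemma card_le_chainHeightBelow {t : Finset α} (hts : t ⊆ s) (htx : ∀ y ∈ t, r y x)
    (ht : IsChain r (t : Set α)) : #t ≤ chainHeightBelow r s x := by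
  classical
  refine le_sup (f := card) (mem_filter.2 ⟨mem_powerset.2 fun y hy => ?_, ht⟩)
  exact mem_filter.2 ⟨hts hy, htx y hy⟩

lemma exists_isChain_card_eq_chainHeightBelow_add_one [IsStrictOrder α r] (hx : x ∈ s) :
    ∃ t ⊆ s, (∀ y ∈ t, r y x ∨ y = x) ∧ IsChain r (t : Set α) ∧
      #t = chainHeightBelow r s x + 1 := by
  classical
  obtain ⟨t, ht, hcard⟩ := exists_mem_eq_sup
    ({y ∈ s | r y x}.powerset.filter fun t : Finset α => IsChain r (t : Set α))
    ⟨∅, by simp⟩ card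
  simp only [mem_filter, mem_powerset, subset_iff] at ht
  have hxt : x ∉ t := fun h => irrefl x (ht.1 h).2
  refine ⟨insert x t, insert_subset hx fun y hy => (ht.1 hy).1, ?_, ?_, ?_⟩
  · simp only [mem_insert]
    rintro y (rfl | hy)
    exacts [.inr rfl, .inl (ht.1 hy).2]
  · rw [coe_insert]
    exact ht.2.insert fun y hy _ => .inr (ht.1 hy).2
  · rw [card_insert_of_notMem hxt, chainHeightBelow, hcard]

lemma chainHeightBelow_lt_of_rel [IsStrictOrder α r] (hx : x ∈ s) (hxy : r x y) :
    chainHeightBelow r s x < chainHeightBelow r s y := by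
  obtain ⟨t, hts, htx, ht, hcard⟩ := exists_isChain_card_eq_chainHeightBelow_add_one (r := r) hx
  have := card_le_chainHeightBelow (r := r) hts
    (fun z hz => (htx z hz).elim (fun hzx => _root_.trans hzx hxy) (· ▸ hxy)) ht
  omega

theorem exists_isChain_card_le_mul [IsStrictOrder α r] (s : Finset α) {C : ℕ}
    (hC : ∀ t ⊆ s, IsAntichain r (t : Set α) → #t ≤ C) :
    ∃ t ⊆ s, IsChain r (t : Set α) ∧ #s ≤ C * #t := by
  classical
  obtain ⟨t, ht, hmax⟩ := exists_max_image
    (s.powerset.filter fun t : Finset α => IsChain r (t : Set α)) card ⟨∅, by simp⟩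
  simp only [mem_filter, mem_powerset] at ht hmax
  refine ⟨t, ht.1, ht.2, ?_⟩
  have hheight : ∀ x ∈ s, chainHeightBelow r s x < #t := fun x hx => by
    obtain ⟨u, hus, -, hu, hcard⟩ := exists_isChain_card_eq_chainHeightBelow_add_one (r := r) hx
    have := hmax u ⟨hus, hu⟩
    omega
  have hfiber : ∀ n, IsAntichain r (({x ∈ s | chainHeightBelow r s x = n} : Finset α) : Set α) := by
    intro n x hx y hy _ hxy
    simp only [mem_coe, mem_filter] at hx hy
    exact (chainHeightBelow_lt_of_rel hx.1 hxy).ne (hx.2.trans hy.2.symm)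
  calc #s ≤ C * #(s.image (chainHeightBelow r s)) :=
        card_le_mul_card_image _ _ fun n _ => hC _ (filter_subset _ _) (hfiber n)
    _ ≤ C * #(range #t) := by
        gcongr
        simpa only [image_subset_iff, mem_range] using hheight
    _ = C * #t := by rw [card_range]

end Finset

section PlaneLex

variable {α β γ₁ γ₂ : Type*} [LinearOrder β] [Preorder γ₁] [Preorder γ₂]
  {p : α → β} {q₁ : α → γ₁} {q₂ : α → γ₂}

def planeLex (p : α → β) (q₁ : α → γ₁) (q₂ : α → γ₂) (a b : α) : Prop :=
  p a < p b ∨ (p a = p b ∧ q₁ a < q₁ b ∧ q₂ a < q₂ b)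

instance : IsStrictOrder α (planeLex p q₁ q₂) where
  irrefl _ := by rintro (h | ⟨-, h, -⟩) <;> exact lt_irrefl _ h
  trans _ _ _ := by
    rintro (hab | ⟨hab, hab₁, hab₂⟩) (hbc | ⟨hbc, hbc₁, hbc₂⟩)
    · exact .inl (hab.trans hbc)
    · exact .inl (hbc ▸ hab)
    · exact .inl (hab ▸ hbc)
    · exact .inr ⟨hab.trans hbc, hab₁.trans hbc₁, hab₂.trans hbc₂⟩

theorem IsAntichain.planeLex_const_and_not_lt [Nonempty β] {s : Set α} (hs : IsAntichain (planeLex p q₁ q₂) s) :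
    (∃ c, ∀ a ∈ s, p a = c) ∧ ∀ a ∈ s, ∀ b ∈ s, ¬(q₁ a < q₁ b ∧ q₂ a < q₂ b) := by
  have hp : ∀ a ∈ s, ∀ b ∈ s, p a = p b := fun a ha b hb => by
    rcases eq_or_ne a b with rfl | hab
    · rfl
    rcases lt_trichotomy (p a) (p b) with h | h | h
    exacts [(hs ha hb hab (.inl h)).elim, h, (hs hb ha hab.symm (.inl h)).elim]
  refine ⟨?_, fun a ha b hb ⟨h₁, h₂⟩ => ?_⟩
  · rcases s.eq_empty_or_nonempty with rfl | ⟨a₀, ha₀⟩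
    · exact ⟨Classical.arbitrary β, by simp⟩
    · exact ⟨p a₀, fun a ha => hp a ha a₀ ha₀⟩
  · exact hs ha hb (fun hab => (hab ▸ h₁).false) (.inr ⟨hp a ha b hb, h₁, h₂⟩)

end PlaneLex

abbrev planeLexX := planeLex (fun t : ℤ × ℤ × ℤ => t.1) (·.2.1) (·.2.2)
abbrev planeLexY := planeLex (fun t : ℤ × ℤ × ℤ => t.2.1) (·.1) (·.2.2)
abbrev planeLexZ := planeLex (fun t : ℤ × ℤ × ℤ => t.2.2) (·.1) (·.2.1)

theorem isChain_less2 {s : Set (ℤ × ℤ × ℤ)} (hX : IsChain planeLexX s) (hY : IsChain planeLexY s)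
    (hZ : IsChain planeLexZ s) : IsChain Less2 s := fun a ha b hb hab => by
  have := hX ha hb hab
  have := hY ha hb hab
  have := hZ ha hb hab
  simp only [planeLexX, planeLexY, planeLexZ, planeLex, Less2] at *
  obtain ⟨a₁, a₂, a₃⟩ := a
  obtain ⟨b₁, b₂, b₃⟩ := b
  simp only [ne_eq, Prod.mk.injEq] at hab
  omega

/-- If a finite collection `S` of triples contains no collapsible collection of size `C`,
then `S` contains a 2-comparable subset of size at least `C⁻³|S|`. -/
theorem stmt_13 (C : ℕ) (S : Finset (ℤ × ℤ × ℤ))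
    (hfree : ∀ H ⊆ S, Collapsible H → H.card < C) :
    ∃ S' ⊆ S, (∀ a ∈ S', ∀ b ∈ S', a ≠ b → Less2 a b ∨ Less2 b a) ∧
      S.card ≤ C ^ 3 * S'.card := by
  have hC : ∀ H ⊆ S, Collapsible H → H.card ≤ C := fun H hH h => (hfree H hH h).le
  obtain ⟨T₁, hT₁, hX, hS⟩ := S.exists_isChain_card_le_mul (r := planeLexX)
    fun H hH h => hC H hH (.inl h.planeLex_const_and_not_lt)
  obtain ⟨T₂, hT₂, hY, hT₁C⟩ := T₁.exists_isChain_card_le_mul (r := planeLexY)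
    fun H hH h => hC H (hH.trans hT₁) (.inr (.inl h.planeLex_const_and_not_lt))
  obtain ⟨T₃, hT₃, hZ, hT₂C⟩ := T₂.exists_isChain_card_le_mul (r := planeLexZ)
    fun H hH h => hC H (hH.trans (hT₂.trans hT₁)) (.inr (.inr h.planeLex_const_and_not_lt))
  have hT₃T₁ : (T₃ : Set (ℤ × ℤ × ℤ)) ⊆ T₁ := Finset.coe_subset.2 (hT₃.trans hT₂)
  refine ⟨T₃, hT₃.trans (hT₂.trans hT₁),
    fun a ha b hb => isChain_less2 (hX.mono hT₃T₁) (hY.mono (Finset.coe_subset.2 hT₃)) hZ ha hb, ?_⟩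
  calc S.card ≤ C * T₁.card := hS
    _ ≤ C * (C * (C * T₃.card)) := by gcongr; exact hT₁C.trans (by gcongr)
    _ = C ^ 3 * T₃.card := by ring
end

section
/- Every 2-increasing sequence of triples in [3]^3 has length at most 4; i.e., F(3,3,3) ≤ 4 for 2-increasing sequences. -/
def coord (p : ℤ × ℤ × ℤ) : Fin 3 → ℤ := ![p.1, p.2.1, p.2.2]

def InCube3 (p : ℤ × ℤ × ℤ) : Prop := ∀ k, 1 ≤ coord p k ∧ coord p k ≤ 3

theorem less2_iff_forall_ne {a b : ℤ × ℤ × ℤ} :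
    Less2 a b ↔ ∀ i j, i ≠ j → coord a i < coord b i ∨ coord a j < coord b j := by
  constructor
  · intro h i j hij
    unfold Less2 at h
    fin_cases i <;> fin_cases j <;> simp_all [coord] <;> tauto
  · intro h
    have h₀₁ := h 0 1 (by decide)
    have h₀₂ := h 0 2 (by decide)
    have h₁₂ := h 1 2 (by decide)
    simp only [coord, Matrix.cons_val] at h₀₁ h₀₂ h₁₂
    unfold Less2
    tauto

namespace Less2

variable {a b c : ℤ × ℤ × ℤ}

theorem lt_of_le {i k : Fin 3} (h : Less2 a b) (hk : coord b k ≤ coord a k) (hik : i ≠ k) :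
    coord a i < coord b i :=
  (less2_iff_forall_ne.1 h i k hik).resolve_right (not_lt.2 hk)

theorem exists_lt_lt (hab : Less2 a b) (hbc : Less2 b c) :
    ∃ k, coord a k < coord b k ∧ coord b k < coord c k := by
  unfold Less2 at hab hbc
  simp only [Fin.exists_fin_succ, Fin.exists_fin_zero, coord, Matrix.cons_val,
    Fin.succ_zero_eq_one, Fin.succ_one_eq_two]
  tauto

end Less2

theorem not_less2_of_chain {a₁ a₂ a₃ a₄ a₅ : ℤ × ℤ × ℤ}
    (h₁ : InCube3 a₁) (h₂ : InCube3 a₂) (h₄ : InCube3 a₄) (h₅ : InCube3 a₅)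
    (h₁₂ : Less2 a₁ a₂) (h₂₃ : Less2 a₂ a₃) (h₃₄ : Less2 a₃ a₄) (h₄₅ : Less2 a₄ a₅) :
    ¬ Less2 a₂ a₄ := by
  intro h₂₄
  obtain ⟨d, h₁₂d, h₂₃d⟩ := h₁₂.exists_lt_lt h₂₃
  obtain ⟨e, h₃₄e, h₄₅e⟩ := h₃₄.exists_lt_lt h₄₅
  have hde : d ≠ e := by
    rintro rfl
    have := h₁ d; have := h₅ d
    omega
  obtain ⟨c, hcd, hce⟩ : ∃ c, c ≠ d ∧ c ≠ e := by
    fin_cases d <;> fin_cases e <;> simp_all <;> decide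
  have h₂₃c := h₂₃.lt_of_le (by have := h₂ e; have := h₅ e; omega) hce
  have h₃₄c := h₃₄.lt_of_le (by have := h₁ d; have := h₄ d; omega) hcd
  have h₂c : coord a₂ c ≤ coord a₁ c := by have := h₁ c; have := h₄ c; omega
  have h₄c : coord a₅ c ≤ coord a₄ c := by have := h₂ c; have := h₅ c; omega
  have h₁₂d := h₁₂.lt_of_le h₂c hcd.symm
  have h₁₂e := h₁₂.lt_of_le h₂c hce.symm
  have h₄₅d := h₄₅.lt_of_le h₄c hcd.symm
  have h₄₅e := h₄₅.lt_of_le h₄c hce.symm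
  have := h₁ d; have := h₁ e; have := h₅ d; have := h₅ e
  rcases less2_iff_forall_ne.1 h₂₄ d e hde with h | h <;> omega

/-- Every 2-increasing sequence of triples in `[3]^3` has length at most 4. -/
theorem stmt_18 (m : ℕ) (a : Fin m → ℤ × ℤ × ℤ)
    (hrange : ∀ i, (a i).1 ∈ Finset.Icc (1 : ℤ) 3 ∧ (a i).2.1 ∈ Finset.Icc (1 : ℤ) 3 ∧
      (a i).2.2 ∈ Finset.Icc (1 : ℤ) 3)
    (hinc : ∀ i j, i < j → Less2 (a i) (a j)) :
    m ≤ 4 := by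
  by_contra! hm
  have hcube (i : Fin m) : InCube3 (a i) := by
    obtain ⟨h₁, h₂, h₃⟩ := hrange i
    rw [Finset.mem_Icc] at h₁ h₂ h₃
    intro k
    fin_cases k <;> simpa [coord]
  have step (k l : ℕ) (hkl : k < l) (hl : l < m) :
      Less2 (a ⟨k, hkl.trans hl⟩) (a ⟨l, hl⟩) :=
    hinc _ _ (Fin.mk_lt_mk.2 hkl)
  exact not_less2_of_chain (hcube ⟨0, by omega⟩) (hcube ⟨1, by omega⟩) (hcube ⟨3, by omega⟩)
    (hcube ⟨4, by omega⟩) (step 0 1 (by omega) (by omega))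
    (step 1 2 (by omega) (by omega)) (step 2 3 (by omega) (by omega))
    (step 3 4 (by omega) (by omega)) (step 1 3 (by omega) (by omega))
end

section
/- Let q be a prime power and k a positive integer, and set r = q^k. The set of all affine functions f: F_q^k → F_q of the form f(x) = a·x + b (with a ∈ F_q^k, b ∈ F_q), viewed as r-tuples indexed by the elements of F_q^k with entries in F_q, has size q^{k+1}, and any two distinct such functions agree in at most q^{k-1} places. Consequently any two of these r-tuples are s-comparable for s = (q^k - q^{k-1})/2; that is, for any two distinct members f, g, either f(x) < g(x) for at least s points x, or g(x) < f(x) for at least s points x (under any fixed linear order on F_q). -/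
/-!
Two distinct affine functions `x ↦ a ⬝ᵥ x + b` and `x ↦ a' ⬝ᵥ x + b'` agree exactly on the
solutions of `(a - a') ⬝ᵥ x = b' - b`: an empty set if `a = a'`, and otherwise a fibre of a
surjective additive map `F^k → F`, hence of size `q^(k-1)`. At every other point one of the two
functions is strictly smaller, so one of the two strict-inequality sets has at least half of the
remaining `q^k - q^(k-1)` points.
-/

open Finset

theorem AddMonoidHom.card_fiber_mul_card_of_surjective {G H : Type*} [AddGroup G] [Fintype G]
    [AddGroup H] [Fintype H] [DecidableEq H] (φ : G →+ H) (hφ : Function.Surjective φ) (h : H) :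
    #{g | φ g = h} * Fintype.card H = Fintype.card G := by
  have hfibers : ∀ y, #{g | φ g = y} = #{g | φ g = h} := fun y =>
    AddMonoidHom.card_fiber_eq_of_mem_range φ (hφ y) (hφ h)
  calc #{g | φ g = h} * Fintype.card H = ∑ y, #{g | φ g = y} := by
        simp [hfibers, mul_comm]
    _ = Fintype.card G := (card_eq_sum_card_fiberwise fun _ _ => mem_coe.mpr (mem_univ _)).symm

theorem ncard_dotProduct_eq {ι F : Type*} [Fintype ι] [Field F] [Fintype F] {a : ι → F}
    (ha : a ≠ 0) (d : F) :
    {x : ι → F | a ⬝ᵥ x = d}.ncard = Fintype.card F ^ (Fintype.card ι - 1) := by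
  classical
  obtain ⟨i, hi⟩ := Function.ne_iff.mp ha
  have : Nonempty ι := ⟨i⟩
  let φ : (ι → F) →+ F := AddMonoidHom.mk' (a ⬝ᵥ ·) (dotProduct_add a)
  have hφ : Function.Surjective φ := fun e =>
    ⟨Pi.single i (e / a i), by simp [φ, dotProduct_single, mul_div_cancel₀ _ hi]⟩
  have hcard := φ.card_fiber_mul_card_of_surjective hφ d
  have hι : Fintype.card ι = Fintype.card ι - 1 + 1 := (Nat.sub_add_cancel Fintype.card_pos).symm
  rw [Fintype.card_fun, hι, pow_succ] at hcard
  rw [Set.ncard_eq_toFinset_card', Set.toFinset_ofPred]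
  exact Nat.eq_of_mul_eq_mul_right Fintype.card_pos hcard

def affineFun {ι R : Type*} [Fintype ι] [Ring R] (p : (ι → R) × R) : (ι → R) → R :=
  fun x => p.1 ⬝ᵥ x + p.2

theorem affineFun_injective {ι R : Type*} [Fintype ι] [Ring R] :
    Function.Injective (affineFun : (ι → R) × R → (ι → R) → R) := by
  classical
  rintro ⟨a, b⟩ ⟨a', b'⟩ h
  have hb : b = b' := by simpa [affineFun] using congrFun h 0
  subst hb
  have ha : a = a' := funext fun i => by
    simpa [affineFun, dotProduct_single] using congrFun h (Pi.single i 1)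
  rw [ha]

theorem ncard_affineFun_eq_le {ι F : Type*} [Fintype ι] [Field F] [Fintype F]
    {p p' : (ι → F) × F} (hp : p ≠ p') :
    {x | affineFun p x = affineFun p' x}.ncard ≤ Fintype.card F ^ (Fintype.card ι - 1) := by
  obtain ⟨a, b⟩ := p
  obtain ⟨a', b'⟩ := p'
  have hset : {x | affineFun (a, b) x = affineFun (a', b') x} = {x | (a - a') ⬝ᵥ x = b' - b} := by
    ext x
    simp only [affineFun, Set.mem_ofPred_eq, sub_dotProduct]
    constructor <;> intro h <;> linear_combination h
  rw [hset]
  by_cases ha : a = a'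
  · have hb : b' - b ≠ 0 := sub_ne_zero.mpr fun hb => hp (by rw [ha, hb])
    simp [ha, hb.symm]
  · exact (ncard_dotProduct_eq (sub_ne_zero.mpr ha) _).le

theorem le_ncard_lt_or_le_ncard_gt {α β : Type*} [Finite α] [LinearOrder β] (f g : α → β) {m : ℕ}
    (h : {x | f x = g x}.ncard ≤ m) :
    (Nat.card α - m) / 2 ≤ {x | f x < g x}.ncard ∨ (Nat.card α - m) / 2 ≤ {x | g x < f x}.ncard := by
  have hcover : Set.univ = {x | f x < g x} ∪ ({x | g x < f x} ∪ {x | f x = g x}) := by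
    ext x
    simpa [or_comm, eq_comm] using lt_trichotomy (f x) (g x)
  have htotal : Nat.card α ≤
      {x | f x < g x}.ncard + ({x | g x < f x}.ncard + {x | f x = g x}.ncard) := by
    rw [← Set.ncard_univ, hcover]
    exact (Set.ncard_union_le _ _).trans (Nat.add_le_add_left (Set.ncard_union_le _ _) _)
  omega

theorem stmt_19_general (q k : ℕ)
    (F : Type) [Field F] [Fintype F] [LinearOrder F] (hF : Fintype.card F = q)
    (S : Set ((Fin k → F) → F))
    (hS : S = {f | ∃ (a : Fin k → F) (b : F), f = fun x => (∑ i, a i * x i) + b}) :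
    S.ncard = q ^ (k + 1) ∧
    ∀ f ∈ S, ∀ g ∈ S, f ≠ g →
      Set.ncard {x : Fin k → F | f x = g x} ≤ q ^ (k - 1) ∧
      ((q ^ k - q ^ (k - 1)) / 2 ≤ Set.ncard {x : Fin k → F | f x < g x} ∨
       (q ^ k - q ^ (k - 1)) / 2 ≤ Set.ncard {x : Fin k → F | g x < f x}) := by
  subst hF
  have hrange : S = Set.range affineFun := by
    ext f
    simp only [hS, Set.mem_range, Prod.exists, Set.mem_ofPred_eq]
    exact exists₂_congr fun a b => eq_comm
  refine ⟨?_, ?_⟩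
  · rw [hrange, ← Nat.card_coe_set_eq, Nat.card_range_of_injective affineFun_injective]
    simp [pow_succ]
  · rw [hrange]
    rintro _ ⟨p, rfl⟩ _ ⟨p', rfl⟩ hpp'
    have hagree := ncard_affineFun_eq_le (ne_of_apply_ne affineFun hpp')
    rw [Fintype.card_fin] at hagree
    have hsize : Nat.card (Fin k → F) = Fintype.card F ^ k := by simp
    exact ⟨hagree, hsize ▸ le_ncard_lt_or_le_ncard_gt _ _ hagree⟩

/-- For `q` a prime power and `r = q^k`, the set of affine functions
`x ↦ a·x + b` from `F_q^k` to `F_q`, viewed as `r`-tuples indexed by `F_q^k` with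
entries in `F_q`, has size `q^{k+1}`; any two distinct such functions agree in at most
`q^{k-1}` places; and consequently any two distinct such functions are `s`-comparable
for `s = (q^k - q^{k-1})/2`, under any fixed linear order on `F_q`. -/
theorem stmt_19 (q k : ℕ) (hq : ∃ (p n : ℕ), p.Prime ∧ 0 < n ∧ q = p ^ n) (hk : 0 < k)
    (F : Type) [Field F] [Fintype F] [LinearOrder F] (hF : Fintype.card F = q)
    (S : Set ((Fin k → F) → F))
    (hS : S = {f | ∃ (a : Fin k → F) (b : F), f = fun x => (∑ i, a i * x i) + b}) :
    S.ncard = q ^ (k + 1) ∧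
    ∀ f ∈ S, ∀ g ∈ S, f ≠ g →
      Set.ncard {x : Fin k → F | f x = g x} ≤ q ^ (k - 1) ∧
      ((q ^ k - q ^ (k - 1)) / 2 ≤ Set.ncard {x : Fin k → F | f x < g x} ∨
       (q ^ k - q ^ (k - 1)) / 2 ≤ Set.ncard {x : Fin k → F | g x < f x}) :=
  stmt_19_general q k F hF S hS
end
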